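/- arXiv:0912.4164 — 2 statements merged into one kernel-verified Lean document; each statement's English description precedes it below -/
import Mathlib

section
/- Let X and Y be disjoint nonempty closed sets in ℝ^d with the Euclidean metric (or, more generally, in a finite-dimensional real normed space whose norm is strictly convex). Then dom(Y, X) equals the closure of the complement of dom(X, Y), i.e., dom(Y, X) = closure(ℝ^d \ dom(X, Y)). -/
/-!
Every point `z` with `infDist z Y ≤ infDist z X` is a limit of points strictly dominated by `Y`:
take a nearest point `y ∈ Y` of `z` and move from `z` towards `y`. Along this segment the
distance to `y` drops by exactly the distance travelled, while by strict convexity the distance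
to any `x ∈ X` drops strictly less, since otherwise `x` would lie on the ray from `z` through
`y` at distance `dist z y`, i.e. `x = y`. The reverse inclusion holds in any metric space because
dominance regions are closed.
-/

open Metric Set

/-- The dominance region of `X` over `Y`: points at least as close to `X` as to `Y`. -/
def domReg {M : Type*} [MetricSpace M] (X Y : Set M) : Set M :=
  {z | infDist z X ≤ infDist z Y}

open Filter Topology AffineMap

section MetricSpace

variable {M : Type*} [MetricSpace M]

theorem compl_domReg (X Y : Set M) : (domReg X Y)ᶜ = {z | infDist z Y < infDist z X} := by
  ext z
  simp [domReg]

theorem isClosed_domReg (X Y : Set M) : IsClosed (domReg X Y) :=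
  isClosed_le (continuous_infDist_pt X) (continuous_infDist_pt Y)

theorem closure_compl_domReg_subset (X Y : Set M) : closure (domReg X Y)ᶜ ⊆ domReg Y X := by
  rw [(isClosed_domReg Y X).closure_subset_iff, compl_domReg]
  exact fun _ hz ↦ le_of_lt (α := ℝ) hz

end MetricSpace

section StrictConvex

variable {E : Type*} [NormedAddCommGroup E] [NormedSpace ℝ E] [StrictConvexSpace ℝ E]

theorem dist_lineMap_right_lt {x y z : E} {t : ℝ} (hxy : x ≠ y) (ht₀ : 0 < t) (ht₁ : t ≤ 1)
    (h : dist z y ≤ dist z x) : dist (lineMap z y t) y < dist (lineMap z y t) x := by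
  set w := lineMap z y t
  have hzw : dist z w = t * dist z y := by
    rw [dist_left_lineMap, Real.norm_of_nonneg ht₀.le]
  have hwy : dist w y = (1 - t) * dist z y := by
    rw [dist_lineMap_right, Real.norm_of_nonneg (sub_nonneg.2 ht₁)]
  by_contra! hle
  have hzx : dist z x = dist z y := by
    linarith [dist_triangle z w x]
  have hw : w = lineMap z x t :=
    eq_lineMap_of_dist_eq_mul_of_dist_eq_mul (by rw [hzx, hzw])
      (by rw [hzx]; linarith [dist_triangle z w x])
  have hsub : t • (y - z) = t • (x - z) := by simpa [w, lineMap_apply_module'] using hw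
  exact hxy (sub_left_injective (smul_right_injective E ht₀.ne' hsub)).symm

variable [ProperSpace E]

theorem infDist_lineMap_lt {X Y : Set E} {y z : E} {t : ℝ} (hX : X.Nonempty) (hXcl : IsClosed X)
    (hy : y ∈ Y) (hyX : y ∉ X) (hzy : dist z y ≤ infDist z X) (ht₀ : 0 < t) (ht₁ : t ≤ 1) :
    infDist (lineMap z y t) Y < infDist (lineMap z y t) X := by
  obtain ⟨x, hx, hwx⟩ := hXcl.exists_infDist_eq_dist hX (lineMap z y t)
  calc infDist (lineMap z y t) Y ≤ dist (lineMap z y t) y := infDist_le_dist_of_mem hy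
    _ < dist (lineMap z y t) x :=
      dist_lineMap_right_lt (ne_of_mem_of_not_mem hx hyX) ht₀ ht₁
        (hzy.trans (infDist_le_dist_of_mem hx))
    _ = infDist (lineMap z y t) X := hwx.symm

theorem mem_closure_compl_domReg {X Y : Set E} {z : E} (hX : X.Nonempty) (hY : Y.Nonempty)
    (hXcl : IsClosed X) (hYcl : IsClosed Y) (hXY : Disjoint X Y) (hz : z ∈ domReg Y X) :
    z ∈ closure (domReg X Y)ᶜ := by
  obtain ⟨y, hy, hzy⟩ := hYcl.exists_infDist_eq_dist hY z
  have hlim : Tendsto (lineMap z y) (𝓝[>] (0 : ℝ)) (𝓝 z) := by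
    simpa using (lineMap_continuous.tendsto (0 : ℝ)).mono_left nhdsWithin_le_nhds
  refine mem_closure_of_tendsto hlim ?_
  filter_upwards [Ioc_mem_nhdsGT one_pos] with t ⟨ht₀, ht₁⟩
  rw [compl_domReg]
  exact infDist_lineMap_lt hX hXcl hy (hXY.notMem_of_mem_right hy) (hzy ▸ hz) ht₀ ht₁

end StrictConvex

/-- In a finite-dimensional real normed space with a strictly convex norm (in particular,
in Euclidean space `ℝ^d`), for disjoint nonempty closed sets `X`, `Y`, the dominance
region of `Y` over `X` is the closure of the complement of that of `X` over `Y`. -/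
theorem dom_eq_closure_compl_dom {E : Type*} [NormedAddCommGroup E] [NormedSpace ℝ E]
    [FiniteDimensional ℝ E] [StrictConvexSpace ℝ E]
    (X Y : Set E) (hX : X.Nonempty) (hY : Y.Nonempty)
    (hXcl : IsClosed X) (hYcl : IsClosed Y) (hXY : Disjoint X Y) :
    domReg Y X = closure ((domReg X Y)ᶜ) :=
  Subset.antisymm (fun _ hz ↦ mem_closure_compl_domReg hX hY hXcl hYcl hXY hz)
    (closure_compl_domReg_subset X Y)
end

section
/- Let P and Q be disjoint nonempty closed sets in Euclidean space ℝ^d and let k ≥ 2. For (k−1)-tuples (R_i, S_i)_{i=1}^{k−1} of pairs of subsets of ℝ^d with P ⊆ R_i, Q ⊆ S_i and R_i ∪ S_i = ℝ^d for all i, define F((R_i, S_i)_i) = (dom(R_{i−1}, S_{i+1}), dom(S_{i+1}, R_{i−1}))_i where R_0 = P and S_k = Q. Suppose (R⁰_i, S⁰_i)_i is such a tuple satisfying R⁰_i ⊆ R¹_i and S⁰_i ⊇ S¹_i for all i, where (R^{n+1}_i, S^{n+1}_i)_i := F((R^n_i, S^n_i)_i) for each n ∈ ℕ. Let R^∞_i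 = ⋃_{n∈ℕ} R^n_i and S^∞_i = ⋂_{n∈ℕ} S^n_i, with the conventions R^∞_0 = P and S^∞_k = Q. Then closure(R^∞_i) ∩ S^∞_j = ∅ whenever 0 ≤ i < j ≤ k. -/
open Metric Set

open Filter Topology

section DomReg

variable {M : Type*} [MetricSpace M]

theorem subset_domReg (X Y : Set M) : X ⊆ domReg X Y := fun _ hx =>
  (infDist_zero_of_mem hx).trans_le infDist_nonneg

theorem domReg_mono {X X' Y Y' : Set M} (hX : X ⊆ X') (hXne : X.Nonempty) (hY : Y' ⊆ Y)
    (hY'ne : Y'.Nonempty) : domReg X Y ⊆ domReg X' Y' := fun _ hw =>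
  (infDist_le_infDist_of_subset hX hXne).trans <| hw.trans <| infDist_le_infDist_of_subset hY hY'ne

theorem infDist_le_infDist_add_two_mul_infDist_domReg (z : M) (X Y : Set M) :
    infDist z X ≤ infDist z Y + 2 * infDist z (domReg X Y) := by
  rcases (domReg X Y).eq_empty_or_nonempty with hD | hD
  · have hX : X = ∅ := subset_empty_iff.1 (hD ▸ subset_domReg X Y)
    rw [hD, hX, infDist_empty]
    linarith [infDist_nonneg (x := z) (s := Y)]
  · have : (infDist z X - infDist z Y) / 2 ≤ infDist z (domReg X Y) := by
      refine (le_infDist hD).2 fun w hw => ?_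
      have hX := infDist_le_infDist_add_dist (x := z) (y := w) (s := X)
      have hY := infDist_le_infDist_add_dist (x := w) (y := z) (s := Y)
      rw [dist_comm] at hY
      linarith [show infDist w X ≤ infDist w Y from hw]
    linarith

theorem tendsto_infDist_of_mem_closure_iUnion {A : ℕ → Set M} (hA : Monotone A) {z : M}
    (hz : z ∈ closure (⋃ n, A n)) : Tendsto (fun n => infDist z (A n)) atTop (𝓝 0) := by
  refine Metric.tendsto_atTop.2 fun ε hε => ?_
  obtain ⟨x, hx, hzx⟩ := Metric.mem_closure_iff.1 hz ε hε
  obtain ⟨N, hxN⟩ := mem_iUnion.1 hx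
  refine ⟨N, fun n hn => ?_⟩
  rw [Real.dist_0_eq_abs, abs_of_nonneg infDist_nonneg]
  exact (infDist_le_dist_of_mem (hA hn hxN)).trans_lt hzx

end DomReg

/-- `(R n l, S n l)_{0 < l < k}` is the `n`-th iterate of `F`; in `R_succ` and `S_succ` the index is
shifted by one to avoid truncated subtraction. -/
structure IsDomIteration {M : Type*} [MetricSpace M] (k : ℕ) (P Q : Set M)
    (R S : ℕ → ℕ → Set M) : Prop where
  R_zero : ∀ n, R n 0 = P
  S_last : ∀ n, S n k = Q
  R_succ : ∀ n l, l + 1 < k → R (n + 1) (l + 1) = domReg (R n l) (S n (l + 2))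
  S_succ : ∀ n l, l + 1 < k → S (n + 1) (l + 1) = domReg (S n (l + 2)) (R n l)
  subset_R_zero : ∀ l, 0 < l → l < k → P ⊆ R 0 l
  subset_S_zero : ∀ l, 0 < l → l < k → Q ⊆ S 0 l
  R_zero_subset_R_one : ∀ l, 0 < l → l < k → R 0 l ⊆ R 1 l
  S_one_subset_S_zero : ∀ l, 0 < l → l < k → S 1 l ⊆ S 0 l

namespace IsDomIteration

variable {M : Type*} [MetricSpace M] {k : ℕ} {P Q : Set M} {R S : ℕ → ℕ → Set M}

theorem R_subset_R_succ_succ (h : IsDomIteration k P Q R S) {n l : ℕ} (hl : l + 1 < k) :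
    R n l ⊆ R (n + 1) (l + 1) :=
  h.R_succ n l hl ▸ subset_domReg _ _

theorem S_subset_S_succ_pred (h : IsDomIteration k P Q R S) {n l : ℕ} (hl : l + 1 < k) :
    S n (l + 2) ⊆ S (n + 1) (l + 1) :=
  h.S_succ n l hl ▸ subset_domReg _ _

theorem subset_R (h : IsDomIteration k P Q R S) (n : ℕ) {l : ℕ} (hl : l < k) : P ⊆ R n l := by
  induction n generalizing l with
  | zero =>
    rcases l with _ | l
    · exact (h.R_zero 0).ge
    · exact h.subset_R_zero _ l.succ_pos hl
  | succ n ih =>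
    rcases l with _ | l
    · exact (h.R_zero _).ge
    · exact (ih (by omega)).trans (h.R_subset_R_succ_succ hl)

theorem subset_S (h : IsDomIteration k P Q R S) (n : ℕ) {l : ℕ} (hl : 0 < l) (hlk : l ≤ k) :
    Q ⊆ S n l := by
  induction n generalizing l with
  | zero =>
    obtain rfl | hlk := hlk.eq_or_lt
    · exact (h.S_last 0).ge
    · exact h.subset_S_zero l hl hlk
  | succ n ih =>
    obtain rfl | hlk := hlk.eq_or_lt
    · exact (h.S_last _).ge
    · obtain ⟨l, rfl⟩ : ∃ l', l = l' + 1 := ⟨l - 1, by omega⟩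
      exact (ih (by omega) hlk).trans (h.S_subset_S_succ_pred hlk)

theorem R_subset_R_succ_and_S_succ_subset_S (h : IsDomIteration k P Q R S) (hP : P.Nonempty)
    (hQ : Q.Nonempty) (n : ℕ) :
    (∀ l < k, R n l ⊆ R (n + 1) l) ∧ ∀ l, 0 < l → l ≤ k → S (n + 1) l ⊆ S n l := by
  induction n with
  | zero =>
    refine ⟨fun l hl => ?_, fun l hl hlk => ?_⟩
    · rcases l with _ | l
      · rw [h.R_zero, h.R_zero]
      · exact h.R_zero_subset_R_one _ l.succ_pos hl
    · obtain rfl | hlk := hlk.eq_or_lt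
      · rw [h.S_last, h.S_last]
      · exact h.S_one_subset_S_zero l hl hlk
  | succ n ih =>
    refine ⟨fun l hl => ?_, fun l hl hlk => ?_⟩
    · rcases l with _ | l
      · rw [h.R_zero, h.R_zero]
      · rw [h.R_succ _ _ hl, h.R_succ _ _ hl]
        exact domReg_mono (ih.1 l (by omega)) (hP.mono (h.subset_R n (by omega)))
          (ih.2 (l + 2) (by omega) hl) (hQ.mono (h.subset_S _ (by omega) hl))
    · obtain rfl | hlk := hlk.eq_or_lt
      · rw [h.S_last, h.S_last]
      · obtain ⟨l, rfl⟩ : ∃ l', l = l' + 1 := ⟨l - 1, by omega⟩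
        rw [h.S_succ _ _ hlk, h.S_succ _ _ hlk]
        exact domReg_mono (ih.2 (l + 2) (by omega) hlk) (hQ.mono (h.subset_S _ (by omega) hlk))
          (ih.1 l (by omega)) (hP.mono (h.subset_R n (by omega)))

theorem monotone_R (h : IsDomIteration k P Q R S) (hP : P.Nonempty) (hQ : Q.Nonempty) {l : ℕ}
    (hl : l < k) : Monotone (R · l) :=
  monotone_nat_of_le_succ fun n => (h.R_subset_R_succ_and_S_succ_subset_S hP hQ n).1 l hl

theorem antitone_S (h : IsDomIteration k P Q R S) (hP : P.Nonempty) (hQ : Q.Nonempty) {l : ℕ}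
    (hl : 0 < l) (hlk : l ≤ k) : Antitone (S · l) :=
  antitone_nat_of_succ_le fun n => (h.R_subset_R_succ_and_S_succ_subset_S hP hQ n).2 l hl hlk

theorem iUnion_R_subset_iUnion_R (h : IsDomIteration k P Q R S) {i l : ℕ} (hil : i ≤ l)
    (hlk : l < k) : ⋃ n, R n i ⊆ ⋃ n, R n l := by
  induction l, hil using Nat.le_induction with
  | base => rfl
  | succ l _ ih =>
    exact (ih (by omega)).trans <| iUnion_subset fun n =>
      (h.R_subset_R_succ_succ hlk).trans (subset_iUnion (R · (l + 1)) (n + 1))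

theorem iInter_S_subset_iInter_S (h : IsDomIteration k P Q R S) (hP : P.Nonempty)
    (hQ : Q.Nonempty) {j l : ℕ} (hl : 0 < l) (hlj : l ≤ j) (hjk : j ≤ k) :
    ⋂ n, S n j ⊆ ⋂ n, S n l := by
  induction hlj using Nat.decreasingInduction with
  | self => rfl
  | of_succ l hlj ih =>
    obtain ⟨l, rfl⟩ : ∃ l', l = l' + 1 := ⟨l - 1, by omega⟩
    refine (ih (by omega)).trans <| subset_iInter fun n => (iInter_subset _ n).trans <|
      (h.S_subset_S_succ_pred (by omega)).trans ?_
    exact h.antitone_S hP hQ hl (by omega) n.le_succ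

theorem infDist_S_eq_zero_of_tendsto (h : IsDomIteration k P Q R S) (hP : P.Nonempty)
    (hQ : Q.Nonempty) {z : M} {l : ℕ} (hl : l + 1 < k)
    (hR : Tendsto (fun n => infDist z (R n l)) atTop (𝓝 0))
    (hS : ∀ n, infDist z (S n (l + 1)) = 0) (m : ℕ) : infDist z (S m (l + 2)) = 0 := by
  refine le_antisymm (ge_of_tendsto hR (eventually_atTop.2 ⟨m, fun n hn => ?_⟩)) infDist_nonneg
  calc infDist z (S m (l + 2))
      ≤ infDist z (S n (l + 2)) :=
        infDist_le_infDist_of_subset (h.antitone_S hP hQ (by omega) hl hn)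
          (hQ.mono (h.subset_S n (by omega) hl))
    _ ≤ infDist z (R n l) + 2 * infDist z (S (n + 1) (l + 1)) :=
        h.S_succ n l hl ▸ infDist_le_infDist_add_two_mul_infDist_domReg z _ _
    _ = infDist z (R n l) := by rw [hS, mul_zero, add_zero]

theorem tendsto_infDist_R_of_tendsto (h : IsDomIteration k P Q R S) {z : M} {l : ℕ}
    (hl : l + 1 < k) (hR : Tendsto (fun n => infDist z (R n (l + 1))) atTop (𝓝 0))
    (hS : ∀ n, infDist z (S n (l + 2)) = 0) :
    Tendsto (fun n => infDist z (R n l)) atTop (𝓝 0) := by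
  have hR' : Tendsto (fun n => 2 * infDist z (R (n + 1) (l + 1))) atTop (𝓝 0) := by
    simpa using (hR.comp (tendsto_add_atTop_nat 1)).const_mul 2
  refine squeeze_zero (fun _ => infDist_nonneg) (fun n => ?_) hR'
  calc infDist z (R n l)
      ≤ infDist z (S n (l + 2)) + 2 * infDist z (R (n + 1) (l + 1)) :=
        h.R_succ n l hl ▸ infDist_le_infDist_add_two_mul_infDist_domReg z _ _
    _ = 2 * infDist z (R (n + 1) (l + 1)) := by rw [hS, zero_add]

theorem tendsto_infDist_R (h : IsDomIteration k P Q R S) (hP : P.Nonempty) (hQ : Q.Nonempty)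
    {z : M} {i l : ℕ} (hzR : z ∈ closure (⋃ n, R n i)) (hil : i ≤ l) (hlk : l < k) :
    Tendsto (fun n => infDist z (R n l)) atTop (𝓝 0) :=
  tendsto_infDist_of_mem_closure_iUnion (h.monotone_R hP hQ hlk)
    (closure_mono (h.iUnion_R_subset_iUnion_R hil hlk) hzR)

theorem infDist_S_eq_zero (h : IsDomIteration k P Q R S) (hP : P.Nonempty) (hQ : Q.Nonempty)
    {z : M} {j l : ℕ} (hzS : z ∈ ⋂ n, S n j) (hl : 0 < l) (hlj : l ≤ j) (hjk : j ≤ k) (n : ℕ) :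
    infDist z (S n l) = 0 :=
  infDist_zero_of_mem (mem_iInter.1 (h.iInter_S_subset_iInter_S hP hQ hl hlj hjk hzS) n)

theorem infDist_Q_eq_zero (h : IsDomIteration k P Q R S) (hP : P.Nonempty) (hQ : Q.Nonempty)
    {z : M} {i j : ℕ} (hij : i < j) (hjk : j ≤ k) (hzR : z ∈ closure (⋃ n, R n i))
    (hzS : z ∈ ⋂ n, S n j) : infDist z Q = 0 := by
  suffices ∀ l, j ≤ l → l ≤ k → ∀ n, infDist z (S n l) = 0 by
    simpa [h.S_last] using this k hjk le_rfl 0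
  intro l hjl
  induction l, hjl using Nat.le_induction with
  | base => exact fun _ => h.infDist_S_eq_zero hP hQ hzS (by omega) le_rfl hjk
  | succ l hjl ih =>
    intro hlk
    obtain ⟨l, rfl⟩ : ∃ l', l = l' + 1 := ⟨l - 1, by omega⟩
    exact h.infDist_S_eq_zero_of_tendsto hP hQ hlk (h.tendsto_infDist_R hP hQ hzR (by omega)
      (by omega)) (ih (by omega))

theorem infDist_P_eq_zero (h : IsDomIteration k P Q R S) (hP : P.Nonempty) (hQ : Q.Nonempty)
    {z : M} {i j : ℕ} (hij : i < j) (hjk : j ≤ k) (hzR : z ∈ closure (⋃ n, R n i))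
    (hzS : z ∈ ⋂ n, S n j) : infDist z P = 0 := by
  suffices Tendsto (fun n => infDist z (R n 0)) atTop (𝓝 0) by
    simpa [h.R_zero] using this
  refine Nat.decreasingInduction (motive := fun l _ => Tendsto (fun n => infDist z (R n l)) atTop
    (𝓝 0)) (fun l hli ih => ?_) (h.tendsto_infDist_R hP hQ hzR le_rfl (by omega)) (Nat.zero_le i)
  exact h.tendsto_infDist_R_of_tendsto (by omega) ih
    (h.infDist_S_eq_zero hP hQ hzS (by omega) (by omega) hjk)

end IsDomIteration

theorem iteration_limits_disjoint_general {d : ℕ} (k : ℕ)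
    (P Q : Set (EuclideanSpace ℝ (Fin d))) (hPne : P.Nonempty) (hQne : Q.Nonempty)
    (hPcl : IsClosed P) (hQcl : IsClosed Q) (hPQ : Disjoint P Q)
    (R S : ℕ → ℕ → Set (EuclideanSpace ℝ (Fin d)))
    -- conventions `R^n_0 = P` and `S^n_k = Q` for all `n`
    (hconv : ∀ n, R n 0 = P ∧ S n k = Q)
    -- the initial tuple belongs to the lattice `𝓛`
    (hlat : ∀ i, 0 < i → i < k → P ⊆ R 0 i ∧ Q ⊆ S 0 i ∧ R 0 i ∪ S 0 i = univ)
    -- the iteration `(R^{n+1}, S^{n+1}) = F (R^n, S^n)`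
    (hiter : ∀ n, ∀ i, 0 < i → i < k →
      R (n + 1) i = domReg (R n (i - 1)) (S n (i + 1)) ∧
      S (n + 1) i = domReg (S n (i + 1)) (R n (i - 1)))
    -- the initial tuple is below its image: `(R^0, S^0) ≤ F (R^0, S^0)`
    (hle : ∀ i, 0 < i → i < k → R 0 i ⊆ R 1 i ∧ S 1 i ⊆ S 0 i) :
    ∀ i j, i < j → j ≤ k → closure (⋃ n, R n i) ∩ (⋂ n, S n j) = ∅ := by
  have h : IsDomIteration k P Q R S :=
    { R_zero := fun n => (hconv n).1
      S_last := fun n => (hconv n).2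
      R_succ := fun n l hl => (hiter n (l + 1) l.succ_pos hl).1
      S_succ := fun n l hl => (hiter n (l + 1) l.succ_pos hl).2
      subset_R_zero := fun l hl hlk => (hlat l hl hlk).1
      subset_S_zero := fun l hl hlk => (hlat l hl hlk).2.1
      R_zero_subset_R_one := fun l hl hlk => (hle l hl hlk).1
      S_one_subset_S_zero := fun l hl hlk => (hle l hl hlk).2 }
  intro i j hij hjk
  refine eq_empty_of_forall_notMem ?_
  rintro z ⟨hzR, hzS⟩
  exact disjoint_left.1 hPQ
    ((hPcl.mem_iff_infDist_zero hPne).2 (h.infDist_P_eq_zero hPne hQne hij hjk hzR hzS))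
    ((hQcl.mem_iff_infDist_zero hQne).2 (h.infDist_Q_eq_zero hPne hQne hij hjk hzR hzS))

/-- For the iterates `(R^n, S^n)` of the operator `F`, the limit sets satisfy
`closure (R^∞ i) ∩ S^∞ j = ∅` whenever `0 ≤ i < j ≤ k`. -/
theorem iteration_limits_disjoint {d : ℕ} (k : ℕ) (hk : 2 ≤ k)
    (P Q : Set (EuclideanSpace ℝ (Fin d))) (hPne : P.Nonempty) (hQne : Q.Nonempty)
    (hPcl : IsClosed P) (hQcl : IsClosed Q) (hPQ : Disjoint P Q)
    (R S : ℕ → ℕ → Set (EuclideanSpace ℝ (Fin d)))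
    -- conventions `R^n_0 = P` and `S^n_k = Q` for all `n`
    (hconv : ∀ n, R n 0 = P ∧ S n k = Q)
    -- the initial tuple belongs to the lattice `𝓛`
    (hlat : ∀ i, 0 < i → i < k → P ⊆ R 0 i ∧ Q ⊆ S 0 i ∧ R 0 i ∪ S 0 i = univ)
    -- the iteration `(R^{n+1}, S^{n+1}) = F (R^n, S^n)`
    (hiter : ∀ n, ∀ i, 0 < i → i < k →
      R (n + 1) i = domReg (R n (i - 1)) (S n (i + 1)) ∧
      S (n + 1) i = domReg (S n (i + 1)) (R n (i - 1)))
    -- the initial tuple is below its image: `(R^0, S^0) ≤ F (R^0, S^0)`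
    (hle : ∀ i, 0 < i → i < k → R 0 i ⊆ R 1 i ∧ S 1 i ⊆ S 0 i) :
    ∀ i j, i < j → j ≤ k → closure (⋃ n, R n i) ∩ (⋂ n, S n j) = ∅ :=
  iteration_limits_disjoint_general k P Q hPne hQne hPcl hQcl hPQ R S hconv hlat hiter hle
end
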